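/- arXiv:math/0602111 — 2 statements merged into one kernel-verified Lean document; each statement's English description precedes it below -/
import Mathlib

section
/- Let V be a nonempty finite set, let gen, k : V → ℕ be functions, and let ν, n, g ∈ ℕ satisfy Σ_{v∈V} k(v) = n + 2ν and Σ_{v∈V} gen(v) + ν + 1 = g + |V|. Assume stability: k(v) ≥ 3 for every v ∈ V with gen(v) = 0. Then the number of vertices v with gen(v) = 0 satisfies #{v ∈ V : gen(v) = 0} + 2 ≤ 2g + n (i.e. the number of rational vertices is at most 2g − 2 + n). -/
/-- For abstract stable dual-graph data of genus `g` with `n` legs and `ν` nodes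
(on a nonempty finite vertex set `V`), the number of rational vertices satisfies
`#{v : gen v = 0} + 2 ≤ 2g + n`. -/
theorem stmt_1 {V : Type*} [Fintype V] [DecidableEq V] [Nonempty V]
    (gen k : V → ℕ) (ν n g : ℕ)
    (hk : ∑ v, k v = n + 2 * ν)
    (hg : (∑ v, gen v) + ν + 1 = g + Fintype.card V)
    (hstab : ∀ v, gen v = 0 → 3 ≤ k v) :
    (Finset.univ.filter fun v => gen v = 0).card + 2 ≤ 2 * g + n := by
  have hle : ∑ v, (2 + (if gen v = 0 then 1 else 0)) ≤ ∑ v, (2 * gen v + k v) := by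
    apply Finset.sum_le_sum
    intro v _
    by_cases h : gen v = 0
    · have := hstab v h
      simp [h]; omega
    · have : 1 ≤ gen v := Nat.one_le_iff_ne_zero.mpr h
      simp [h]; omega
  have hsplit : ∑ v, (2 + (if gen v = 0 then 1 else 0)) =
      2 * Fintype.card V + (Finset.univ.filter fun v => gen v = 0).card := by
    rw [Finset.sum_add_distrib, Finset.sum_const, Finset.card_univ, smul_eq_mul,
      Nat.mul_comm, Finset.sum_boole]
    simp
  have hsum : ∑ v, (2 * gen v + k v) = 2 * (∑ v, gen v) + ∑ v, k v := by
    rw [Finset.sum_add_distrib, Finset.mul_sum]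
  omega
end

section
/- Let T be a finite tree (finite connected acyclic simple graph) on a nonempty vertex set V, and let gen, legs : V → ℕ satisfy the stability condition: deg(v) + legs(v) ≥ 3 for every v ∈ V with gen(v) = 0, where deg(v) is the degree of v in T. Set g = Σ_{v∈V} gen(v) and n = Σ_{v∈V} legs(v), and assume 2g − 2 + n > 0 (i.e. 2g + n ≥ 3). Then the number of vertices v with gen(v) = 0 satisfies #{v ∈ V : gen(v) = 0} + 2 ≤ g + n (i.e. the number of rational vertices is at most g − 2 + n). -/
/-- For a finite tree `T` on a nonempty vertex set `V` with weights
`gen, legs : V → ℕ` satisfying the stability condition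
`deg v + legs v ≥ 3` whenever `gen v = 0`, with `g = Σ gen v`, `n = Σ legs v`
and `2g + n ≥ 3`, the number of rational vertices satisfies
`#{v : gen v = 0} + 2 ≤ g + n`. -/
theorem stmt_2 {V : Type*} [Fintype V] [DecidableEq V] [Nonempty V]
    (T : SimpleGraph V) [DecidableRel T.Adj] (hT : T.IsTree)
    (gen legs : V → ℕ)
    (hstab : ∀ v, gen v = 0 → 3 ≤ T.degree v + legs v)
    (g n : ℕ) (hg : g = ∑ v, gen v) (hn : n = ∑ v, legs v)
    (hgn : 3 ≤ 2 * g + n) :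
    (Finset.univ.filter fun v => gen v = 0).card + 2 ≤ g + n := by
  classical
  set R : Finset V := Finset.univ.filter fun v => gen v = 0 with hR
  set Rc : Finset V := Finset.univ.filter fun v => gen v ≠ 0 with hRc
  set N : ℕ := Fintype.card V with hN
  -- non-rational vertices contribute at least 1 to g
  have hNRg : Rc.card ≤ g := by
    calc Rc.card = ∑ v ∈ Rc, 1 := by simp
    _ ≤ ∑ v ∈ Rc, gen v := Finset.sum_le_sum fun v hv => by
        have := (Finset.mem_filter.mp hv).2; omega
    _ ≤ ∑ v, gen v := Finset.sum_le_sum_of_subset (Finset.subset_univ _)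
    _ = g := hg.symm
  have hcardsplit : R.card + Rc.card = N := by
    rw [hR, hRc, hN]
    rw [Finset.card_filter_add_card_filter_not]
    exact Finset.card_univ
  rcases Nat.lt_or_ge N 2 with hN1 | hN2
  · -- N = 1
    have hN1' : N = 1 := by
      have : 0 < N := Fintype.card_pos
      omega
    obtain ⟨v, hv⟩ := Fintype.card_eq_one_iff.mp (hN ▸ hN1')
    have huniv : (Finset.univ : Finset V) = {v} := by
      ext w; simp [hv w]
    have hdeg : T.degree v = 0 := by
      by_contra h
      obtain ⟨w, hw⟩ := T.degree_pos_iff_exists_adj v |>.mp (Nat.pos_of_ne_zero h)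
      exact T.ne_of_adj hw (hv w).symm
    have hgv : g = gen v := by rw [hg, huniv, Finset.sum_singleton]
    have hnv : n = legs v := by rw [hn, huniv, Finset.sum_singleton]
    by_cases h0 : gen v = 0
    · have h3 := hstab v h0
      have hRcard : R.card = 1 := by
        rw [hR, huniv]; simp [Finset.filter_singleton, h0]
      omega
    · have hRcard : R.card = 0 := by
        rw [hR, huniv]; simp [Finset.filter_singleton, h0]
      omega
  · -- N ≥ 2 : every vertex has degree ≥ 1
    have hdeg1 : ∀ v : V, 1 ≤ T.degree v := by
      intro v
      obtain ⟨w, hw⟩ := Fintype.exists_ne_of_one_lt_card hN2 v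
      obtain ⟨p⟩ := hT.isConnected.preconnected v w
      cases p with
      | nil => exact absurd rfl (Ne.symm hw)
      | cons h q => exact (T.degree_pos_iff_exists_adj v).mpr ⟨_, h⟩
    -- degree sum
    have hdegsum : ∑ v, T.degree v = 2 * (N - 1) := by
      rw [T.sum_degrees_eq_twice_card_edges]
      have := hT.card_edgeFinset
      omega
    have hsplit : ∑ v ∈ R, T.degree v + ∑ v ∈ Rc, T.degree v = 2 * (N - 1) := by
      rw [← hdegsum, hR, hRc]
      exact Finset.sum_filter_add_sum_filter_not _ _ _
    have hRcdeg : Rc.card ≤ ∑ v ∈ Rc, T.degree v := by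
      calc Rc.card = ∑ v ∈ Rc, 1 := by simp
      _ ≤ ∑ v ∈ Rc, T.degree v := Finset.sum_le_sum fun v _ => hdeg1 v
    have hRlegs : ∑ v ∈ R, legs v ≤ n := by
      rw [hn]; exact Finset.sum_le_sum_of_subset (Finset.subset_univ _)
    have h3R : 3 * R.card ≤ ∑ v ∈ R, T.degree v + ∑ v ∈ R, legs v := by
      rw [← Finset.sum_add_distrib]
      calc 3 * R.card = ∑ v ∈ R, 3 := by simp [Nat.mul_comm]
      _ ≤ ∑ v ∈ R, (T.degree v + legs v) := Finset.sum_le_sum fun v hv =>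
          hstab v (Finset.mem_filter.mp hv).2
    omega
end
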